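/- arXiv:2305.14848 — 9 statements merged into one kernel-verified Lean document; each statement's English description precedes it below -/
import Mathlib

section
/- The Motzkin form M(x,y,z) = x⁴y² + x²y⁴ − 3x²y²z² + z⁶ is not a sum of squares of real polynomials. -/
open MvPolynomial

/-- The Motzkin form as a polynomial in three variables. -/
noncomputable def Motzkin : MvPolynomial (Fin 3) ℝ :=
  X 0 ^ 4 * X 1 ^ 2 + X 0 ^ 2 * X 1 ^ 4 - 3 * (X 0 ^ 2 * X 1 ^ 2 * X 2 ^ 2) + X 2 ^ 6

/-- A sum of squares of reals is zero iff each term is zero. -/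
lemma real_sos_zero {k : ℕ} (f : Fin k → ℝ) (h : ∑ i, f i ^ 2 = 0) (i : Fin k) : f i = 0 := by
  have h2 := (Finset.sum_eq_zero_iff_of_nonneg (by intro j _; positivity)).mp h i
    (Finset.mem_univ i)
  exact (pow_eq_zero_iff two_ne_zero).mp h2

/-- A sum of squares of real polynomials is zero iff each term is zero. -/
lemma polyreal_sos_zero {k : ℕ} (f : Fin k → Polynomial ℝ) (h : ∑ i, f i ^ 2 = 0)
    (i : Fin k) : f i = 0 := by
  apply Polynomial.funext
  intro r
  have h2 : ∑ j, (f j).eval r ^ 2 = 0 := by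
    have := congrArg (Polynomial.eval r) h
    simpa [Polynomial.eval_finset_sum] using this
  simpa using real_sos_zero _ h2 i

/-- Degree bound for sums of squares over a "formally real" commutative ring. -/
lemma sos_natDegree_le {S : Type*} [CommRing S]
    (hre : ∀ (k : ℕ) (f : Fin k → S), ∑ i, f i ^ 2 = 0 → ∀ i, f i = 0)
    {k : ℕ} (p : Fin k → Polynomial S) (q : Polynomial S)
    (h : ∑ i, p i ^ 2 = q) (i : Fin k) : 2 * (p i).natDegree ≤ q.natDegree := by
  by_contra hlt
  push_neg at hlt
  set D := Finset.univ.sup (fun j => (p j).natDegree) with hD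
  have hiD : (p i).natDegree ≤ D :=
    Finset.le_sup (f := fun j => (p j).natDegree) (Finset.mem_univ i)
  have h2D : q.natDegree < 2 * D := lt_of_lt_of_le hlt (by omega)
  have hq0 : q.coeff (2 * D) = 0 := Polynomial.coeff_eq_zero_of_natDegree_lt h2D
  have hkey : ∀ j, (p j ^ 2).coeff (2 * D) = ((p j).coeff D) ^ 2 := by
    intro j
    have hjD : (p j).natDegree ≤ D :=
      Finset.le_sup (f := fun j => (p j).natDegree) (Finset.mem_univ j)
    rcases lt_or_eq_of_le hjD with hlt' | heq
    · have h1 : (p j ^ 2).natDegree < 2 * D := by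
        have := Polynomial.natDegree_pow_le (p := p j) (n := 2)
        omega
      rw [Polynomial.coeff_eq_zero_of_natDegree_lt h1,
        Polynomial.coeff_eq_zero_of_natDegree_lt hlt']
      ring
    · rw [sq, sq]
      have h2 : 2 * D = (p j).natDegree + (p j).natDegree := by omega
      rw [h2, Polynomial.coeff_mul_degree_add_degree]
      simp [Polynomial.leadingCoeff, heq]
  have hc := congrArg (fun r => Polynomial.coeff r (2 * D)) h
  simp only [Polynomial.finset_sum_coeff] at hc
  have hsum : ∑ j, ((p j).coeff D) ^ 2 = 0 := by
    calc ∑ j, ((p j).coeff D) ^ 2 = ∑ j, (p j ^ 2).coeff (2 * D) :=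
          Finset.sum_congr rfl fun j _ => (hkey j).symm
      _ = q.coeff (2 * D) := hc
      _ = 0 := hq0
  have hall := hre _ _ hsum
  obtain ⟨j, -, hj⟩ := Finset.exists_mem_eq_sup Finset.univ ⟨i, Finset.mem_univ i⟩
    (fun j => (p j).natDegree)
  have hcj : (p j).coeff ((p j).natDegree) = 0 := by
    rw [← hj]; exact hall j
  have hpj : p j = 0 := Polynomial.leadingCoeff_eq_zero.mp hcj
  have hD0 : D = 0 := by rw [hD, hj, hpj, Polynomial.natDegree_zero]
  omega

section coeffsq
variable {A : Type*} [CommRing A]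

lemma coeff_sq0 (p : Polynomial A) : (p ^ 2).coeff 0 = p.coeff 0 ^ 2 := by
  rw [sq, Polynomial.coeff_mul]; simp [sq]

lemma coeff_mul2 (p q : Polynomial A) :
    (p * q).coeff 2 = p.coeff 0 * q.coeff 2 + p.coeff 1 * q.coeff 1
      + p.coeff 2 * q.coeff 0 := by
  rw [Polynomial.coeff_mul, Finset.Nat.sum_antidiagonal_eq_sum_range_succ_mk]
  simp [Finset.sum_range_succ]

lemma coeff_sq2 (p : Polynomial A) :
    (p ^ 2).coeff 2 = p.coeff 0 * p.coeff 2 + p.coeff 1 * p.coeff 1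
      + p.coeff 2 * p.coeff 0 := by
  rw [sq, coeff_mul2]

lemma coeff_sq4 (p : Polynomial A) :
    (p ^ 2).coeff 4 = p.coeff 0 * p.coeff 4 + p.coeff 1 * p.coeff 3 + p.coeff 2 * p.coeff 2
      + p.coeff 3 * p.coeff 1 + p.coeff 4 * p.coeff 0 := by
  rw [sq, Polynomial.coeff_mul, Finset.Nat.sum_antidiagonal_eq_sum_range_succ_mk]
  simp [Finset.sum_range_succ]

end coeffsq

/-- The Motzkin form is not a sum of squares of real polynomials. -/
theorem motzkin_not_sos :
    ¬ ∃ (k : ℕ) (g : Fin k → MvPolynomial (Fin 3) ℝ), Motzkin = ∑ i, (g i) ^ 2 := by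
  rintro ⟨k, g, hg⟩
  classical
  set ψ : MvPolynomial (Fin 3) ℝ →ₐ[ℝ] Polynomial (Polynomial ℝ) :=
    MvPolynomial.aeval ![Polynomial.C Polynomial.X, Polynomial.X, 1] with hψdef
  set h : Fin k → Polynomial (Polynomial ℝ) := fun i => ψ (g i) with hhdef
  have hψM : ψ Motzkin =
      Polynomial.C (Polynomial.X ^ 4 - 3 * Polynomial.X ^ 2) * Polynomial.X ^ 2
        + Polynomial.C (Polynomial.X ^ 2) * Polynomial.X ^ 4 + 1 := by
    simp [Motzkin, hψdef, map_pow, map_ofNat]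
    ring
  have hE : Polynomial.C (Polynomial.X ^ 4 - 3 * Polynomial.X ^ 2) * Polynomial.X ^ 2
        + Polynomial.C (Polynomial.X ^ 2) * Polynomial.X ^ 4 + 1 = ∑ i, h i ^ 2 := by
    rw [← hψM, hg, map_sum]
    simp [hhdef, map_pow]
  -- Step 1: the h i have (outer) degree at most 2
  have hndE : ((Polynomial.C (Polynomial.X ^ 4 - 3 * Polynomial.X ^ 2) * Polynomial.X ^ 2
        + Polynomial.C (Polynomial.X ^ 2) * Polynomial.X ^ 4 + 1 :
        Polynomial (Polynomial ℝ))).natDegree ≤ 4 := by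
    compute_degree
  have hnd : ∀ i, (h i).natDegree ≤ 2 := by
    intro i
    have := sos_natDegree_le (fun k f hf => polyreal_sos_zero f hf) h _ hE.symm i
    omega
  have hH : ∀ (i : Fin k) (n : ℕ), 3 ≤ n → (h i).coeff n = 0 := by
    intro i n hn
    exact Polynomial.coeff_eq_zero_of_natDegree_lt (lt_of_le_of_lt (hnd i) (by omega))
  -- Step 2: coefficient equations in ℝ[x]
  have key : ∀ n, ((Polynomial.C (Polynomial.X ^ 4 - 3 * Polynomial.X ^ 2) * Polynomial.X ^ 2
        + Polynomial.C (Polynomial.X ^ 2) * Polynomial.X ^ 4 + 1 :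
        Polynomial (Polynomial ℝ))).coeff n = ∑ i, (h i ^ 2).coeff n := by
    intro n; rw [hE, Polynomial.finset_sum_coeff]
  have eq0 : ∑ i, ((h i).coeff 0) ^ 2 = 1 := by
    have h0 := key 0
    have hL : ((Polynomial.C (Polynomial.X ^ 4 - 3 * Polynomial.X ^ 2) * Polynomial.X ^ 2
        + Polynomial.C (Polynomial.X ^ 2) * Polynomial.X ^ 4 + 1 :
        Polynomial (Polynomial ℝ))).coeff 0 = 1 := by
      simp only [Polynomial.coeff_add, Polynomial.coeff_C_mul_X_pow, Polynomial.coeff_one]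
      norm_num
    rw [hL] at h0
    rw [h0]
    exact Finset.sum_congr rfl fun i _ => (coeff_sq0 (h i)).symm
  have eq2 : ∑ i, ((h i).coeff 0 * (h i).coeff 2 + (h i).coeff 1 * (h i).coeff 1
      + (h i).coeff 2 * (h i).coeff 0) =
      Polynomial.X ^ 4 - 3 * Polynomial.X ^ 2 := by
    have h2 := key 2
    have hL : ((Polynomial.C (Polynomial.X ^ 4 - 3 * Polynomial.X ^ 2) * Polynomial.X ^ 2
        + Polynomial.C (Polynomial.X ^ 2) * Polynomial.X ^ 4 + 1 :
        Polynomial (Polynomial ℝ))).coeff 2 = Polynomial.X ^ 4 - 3 * Polynomial.X ^ 2 := by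
      simp only [Polynomial.coeff_add, Polynomial.coeff_C_mul_X_pow, Polynomial.coeff_one]
      norm_num
    rw [hL] at h2
    rw [h2]
    exact Finset.sum_congr rfl fun i _ => (coeff_sq2 (h i)).symm
  have eq4 : ∑ i, ((h i).coeff 2) ^ 2 = Polynomial.X ^ 2 := by
    have h4 := key 4
    have hL : ((Polynomial.C (Polynomial.X ^ 4 - 3 * Polynomial.X ^ 2) * Polynomial.X ^ 2
        + Polynomial.C (Polynomial.X ^ 2) * Polynomial.X ^ 4 + 1 :
        Polynomial (Polynomial ℝ))).coeff 4 = Polynomial.X ^ 2 := by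
      simp only [Polynomial.coeff_add, Polynomial.coeff_C_mul_X_pow, Polynomial.coeff_one]
      norm_num
    rw [hL] at h4
    rw [h4]
    refine Finset.sum_congr rfl fun i _ => ?_
    rw [coeff_sq4, hH i 4 (by norm_num), hH i 3 (by norm_num)]
    ring
  -- Step 3: degree bounds in ℝ[x]
  have nd0 : ∀ i, ((h i).coeff 0).natDegree = 0 := by
    intro i
    have := sos_natDegree_le (fun k f hf => real_sos_zero f hf)
      (fun i => (h i).coeff 0) _ eq0 i
    simpa using this
  have nd2 : ∀ i, ((h i).coeff 2).natDegree ≤ 1 := by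
    intro i
    have := sos_natDegree_le (fun k f hf => real_sos_zero f hf)
      (fun i => (h i).coeff 2) _ eq4 i
    have hx : (Polynomial.X ^ 2 : Polynomial ℝ).natDegree = 2 := by
      simp [Polynomial.natDegree_X_pow]
    omega
  have nd1 : ∀ i, ((h i).coeff 1).natDegree ≤ 2 := by
    intro i
    have hsplit : ∑ i, ((h i).coeff 1) ^ 2 =
        (Polynomial.X ^ 4 - 3 * Polynomial.X ^ 2)
          - ∑ i, ((h i).coeff 0 * (h i).coeff 2 + (h i).coeff 2 * (h i).coeff 0) := by
      rw [← eq2, ← Finset.sum_sub_distrib]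
      refine Finset.sum_congr rfl fun i _ => by ring
    have hndq : ((Polynomial.X ^ 4 - 3 * Polynomial.X ^ 2 : Polynomial ℝ)
          - ∑ i, ((h i).coeff 0 * (h i).coeff 2 + (h i).coeff 2 * (h i).coeff 0)).natDegree
          ≤ 4 := by
      refine le_trans (Polynomial.natDegree_sub_le _ _) ?_
      have h1 : ((Polynomial.X ^ 4 - 3 * Polynomial.X ^ 2 : Polynomial ℝ)).natDegree ≤ 4 := by
        compute_degree
      have h2 : (∑ i, ((h i).coeff 0 * (h i).coeff 2
          + (h i).coeff 2 * (h i).coeff 0)).natDegree ≤ 1 := by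
        refine Polynomial.natDegree_sum_le_of_forall_le _ _ fun i _ => ?_
        refine le_trans (Polynomial.natDegree_add_le _ _) ?_
        have hm1 : ((h i).coeff 0 * (h i).coeff 2).natDegree ≤ 1 := by
          refine le_trans (Polynomial.natDegree_mul_le) ?_
          rw [nd0 i]
          simpa using nd2 i
        have hm2 : ((h i).coeff 2 * (h i).coeff 0).natDegree ≤ 1 := by
          refine le_trans (Polynomial.natDegree_mul_le) ?_
          rw [nd0 i]
          simpa using nd2 i
        omega
      omega
    have := sos_natDegree_le (fun k f hf => real_sos_zero f hf)
      (fun i => (h i).coeff 1) _ hsplit i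
    omega
  -- Step 4: scalar equations
  have ea : ∀ i, ((h i).coeff 2).coeff 0 = 0 := by
    apply real_sos_zero (fun i => ((h i).coeff 2).coeff 0)
    have := congrArg (fun p => Polynomial.coeff p 0) eq4
    simp only [Polynomial.finset_sum_coeff, coeff_sq0] at this
    rw [this]
    simp [Polynomial.coeff_X_pow]
  have ed0 : ∀ i, ((h i).coeff 1).coeff 0 = 0 := by
    apply real_sos_zero (fun i => ((h i).coeff 1).coeff 0)
    have := congrArg (fun p => Polynomial.coeff p 0) eq2
    simp only [Polynomial.finset_sum_coeff, Polynomial.coeff_add,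
      Polynomial.mul_coeff_zero] at this
    simp only [ea, mul_zero, zero_mul, zero_add, add_zero] at this
    have hR : ((Polynomial.X ^ 4 - 3 * Polynomial.X ^ 2 : Polynomial ℝ)).coeff 0 = 0 := by
      simp
    rw [hR] at this
    rw [← this]
    exact Finset.sum_congr rfl fun i _ => pow_two _
  -- Step 5: the contradiction from the coefficient of x^2 y^2
  have final : ∑ i, (((h i).coeff 1).coeff 1) ^ 2 = -3 := by
    have hc2 := congrArg (fun p => Polynomial.coeff p 2) eq2
    simp only [Polynomial.finset_sum_coeff, Polynomial.coeff_add, coeff_mul2] at hc2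
    have hz0 : ∀ i, ((h i).coeff 0).coeff 1 = 0 := fun i =>
      Polynomial.coeff_eq_zero_of_natDegree_lt (by rw [nd0 i]; omega)
    have hz0' : ∀ i, ((h i).coeff 0).coeff 2 = 0 := fun i =>
      Polynomial.coeff_eq_zero_of_natDegree_lt (by rw [nd0 i]; omega)
    have hz2 : ∀ i, ((h i).coeff 2).coeff 2 = 0 := fun i =>
      Polynomial.coeff_eq_zero_of_natDegree_lt (lt_of_le_of_lt (nd2 i) (by omega))
    simp only [hz0, hz0', hz2, ea, ed0, mul_zero, zero_mul, add_zero, zero_add] at hc2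
    have hrhs : ((Polynomial.X ^ 4 - 3 * Polynomial.X ^ 2 : Polynomial ℝ)).coeff 2 = -3 := by
      simp [Polynomial.coeff_X_pow, Polynomial.coeff_sub]
    rw [hrhs] at hc2
    rw [← hc2]
    exact Finset.sum_congr rfl fun i _ => pow_two _
  have hnonneg : (0:ℝ) ≤ ∑ i, (((h i).coeff 1).coeff 1) ^ 2 :=
    Finset.sum_nonneg fun i _ => sq_nonneg _
  rw [final] at hnonneg
  linarith
end

section
/- The Choi–Lam form Q₁(x,y,z,w) = x²y² + x²z² + y²z² + w⁴ − 4wxyz is nonnegative on ℝ⁴ but is not a sum of squares of real polynomials. -/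
open MvPolynomial

/-- The Choi–Lam form `Q₁(x,y,z,w) = x²y² + x²z² + y²z² + w⁴ − 4wxyz`. -/
noncomputable def ChoiLamQ1 : MvPolynomial (Fin 4) ℝ :=
  X 0 ^ 2 * X 1 ^ 2 + X 0 ^ 2 * X 2 ^ 2 + X 1 ^ 2 * X 2 ^ 2 + X 3 ^ 4
    - 4 * (X 3 * X 0 * X 1 * X 2)

/-!
Nonnegativity is the AM–GM inequality `4|xyzw| ≤ x²y² + x²z² + y²z² + w⁴`.

Suppose `Q₁ = ∑ gᵢ²`. Restricting to a line `t ↦ t • c` gives univariate polynomials whose squares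
sum to `Q₁(c) t⁴`; comparing lowest and highest coefficients shows each `gᵢ(t • c)` is a multiple
of `t²`, so every `gᵢ` is a quadratic form. Each `gᵢ` vanishes on the zeros of `Q₁`, among them
`e₁, e₂, e₃` and the four points `(1, ±1, ±1, ±1)` with `xyzw = 1`. By the parallelogram law the
values of a quadratic form at these seven points determine its value at `e₄`, which is therefore
`0`; but then `1 = Q₁(e₄) = ∑ gᵢ(e₄)² = 0`.
-/

theorem Finset.sum_sq_eq_zero_iff {ι R : Type*} [CommRing R] [LinearOrder R]
    [IsStrictOrderedRing R] (s : Finset ι) (f : ι → R) :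
    ∑ i ∈ s, f i ^ 2 = 0 ↔ ∀ i ∈ s, f i = 0 := by
  simpa only [sq] using Finset.sum_mul_self_eq_zero_iff s f

namespace Polynomial

variable {R : Type*} [CommRing R]

theorem coeff_sq_two_mul_of_forall_lt {p : R[X]} {d : ℕ} (hp : ∀ e < d, p.coeff e = 0) :
    (p ^ 2).coeff (2 * d) = p.coeff d ^ 2 := by
  obtain ⟨q, rfl⟩ := X_pow_dvd_iff.mpr hp
  rw [mul_pow, ← pow_mul, mul_comm d 2, coeff_X_pow_mul', coeff_X_pow_mul']
  simp [pow_two, mul_coeff_zero]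

theorem coeff_eq_zero_of_sum_sq_coeff_eq_zero {ι : Type*} [Fintype ι] [LinearOrder R]
    [IsStrictOrderedRing R] {p : ι → R[X]} {n : ℕ} (h : ∀ d ≠ 2 * n, (∑ i, p i ^ 2).coeff d = 0)
    {d : ℕ} (hd : d ≠ n) (i : ι) : (p i).coeff d = 0 := by
  have vanish : ∀ d ≠ n, (∀ i, (p i ^ 2).coeff (2 * d) = (p i).coeff d ^ 2) →
      ∀ i, (p i).coeff d = 0 := by
    intro d hd hsq i
    have h0 := h (2 * d) (by omega)
    simp_rw [finsetSum_coeff, hsq] at h0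
    exact (Finset.sum_sq_eq_zero_iff _ _).mp h0 i (Finset.mem_univ i)
  have low : ∀ d < n, ∀ i, (p i).coeff d = 0 := by
    intro d
    induction d using Nat.strong_induction_on with
    | _ d ih =>
      intro hd
      exact vanish d hd.ne fun i =>
        coeff_sq_two_mul_of_forall_lt fun e he => ih e he (he.trans hd) i
  have high : ∀ k, (∀ i, (p i).natDegree ≤ n + k) → ∀ i, (p i).natDegree ≤ n := by
    intro k
    induction k with
    | zero => exact id
    | succ k ih =>
      intro hk
      have htop := vanish (n + (k + 1)) (by omega) fun i => coeff_pow_of_natDegree_le (hk i)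
      exact ih fun i => (natDegree_le_pred (hk i) (htop i)).trans (by omega)
  rcases hd.lt_or_gt with hlt | hgt
  · exact low d hlt i
  · have hbound (j : ι) : (p j).natDegree ≤ n + ∑ k, (p k).natDegree :=
      le_add_left (Finset.single_le_sum (f := fun j => (p j).natDegree)
        (fun j _ => Nat.zero_le _) (Finset.mem_univ j))
    exact coeff_eq_zero_of_natDegree_lt ((high _ hbound i).trans_lt hgt)

end Polynomial

namespace MvPolynomial

variable {σ R : Type*} [CommRing R]

theorem IsHomogeneous.eval_add_add_eval_sub {g : MvPolynomial σ R} (hg : g.IsHomogeneous 2)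
    (u v : σ → R) : eval (u + v) g + eval (u - v) g = 2 * eval u g + 2 * eval v g := by
  have hspan := (homogeneousSubmodule_one_pow (σ := σ) (R := R) 2).ge hg
  rw [pow_two, homogeneousSubmodule_one_eq_span_X, Submodule.span_mul_span] at hspan
  clear hg
  induction hspan using Submodule.span_induction with
  | mem x hx =>
    obtain ⟨_, ⟨i, rfl⟩, _, ⟨j, rfl⟩, rfl⟩ := hx
    simp only [map_mul, eval_X, Pi.add_apply, Pi.sub_apply]
    ring
  | zero => simp
  | add x y _ _ hx hy => simp only [map_add]; linear_combination hx + hy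
  | smul r x _ hx => simp only [smul_eval]; linear_combination r * hx

theorem coeff_aeval_C_mul_X (c : σ → R) (g : MvPolynomial σ R) (d : ℕ) :
    (aeval (fun j => Polynomial.C (c j) * Polynomial.X) g).coeff d
      = eval c (homogeneousComponent d g) := by
  induction g using MvPolynomial.induction_on' with
  | add p q hp hq => simp [hp, hq]
  | monomial u a =>
    have hprod : (u.prod fun j e => (Polynomial.C (c j) * Polynomial.X) ^ e)
        = Polynomial.C (u.prod fun j e => c j ^ e) * Polynomial.X ^ u.degree := by
      rw [Finsupp.prod, Finsupp.prod, Finsupp.degree_apply, ← Finset.prod_pow_eq_pow_sum,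
        map_prod, ← Finset.prod_mul_distrib]
      exact Finset.prod_congr rfl fun j _ => by rw [mul_pow, map_pow]
    rw [aeval_monomial, hprod, Polynomial.algebraMap_apply, Algebra.algebraMap_self,
      RingHom.id_apply, ← mul_assoc, ← Polynomial.C_mul, Polynomial.coeff_C_mul_X_pow,
      homogeneousComponent_of_mem (isHomogeneous_monomial a rfl)]
    split_ifs <;> simp [eval_monomial]

theorem IsHomogeneous.of_sum_sq {ι : Type*} [Fintype ι] [LinearOrder R] [IsStrictOrderedRing R]
    {g : ι → MvPolynomial σ R} {n : ℕ} (h : (∑ i, g i ^ 2).IsHomogeneous (2 * n)) (i : ι) :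
    (g i).IsHomogeneous n := by
  have hcomp : ∀ d ≠ n, homogeneousComponent d (g i) = 0 := by
    intro d hd
    refine (homogeneousComponent_isHomogeneous d _).eq_zero_of_forall_eval_eq_zero fun c => ?_
    rw [← coeff_aeval_C_mul_X]
    refine Polynomial.coeff_eq_zero_of_sum_sq_coeff_eq_zero
      (p := fun j => MvPolynomial.aeval (fun k => Polynomial.C (c k) * Polynomial.X) (g j))
      (fun e he => ?_) hd i
    simp_rw [← map_pow, ← map_sum]
    rw [coeff_aeval_C_mul_X, homogeneousComponent_of_mem h, if_neg he, map_zero]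
  have hg : g i = homogeneousComponent n (g i) := by
    ext m
    rw [coeff_homogeneousComponent]
    split_ifs with hm
    · rfl
    · have hcoeff := coeff_homogeneousComponent m.degree (g i) m
      rwa [if_pos rfl, hcomp _ hm, coeff_zero, eq_comm] at hcoeff
  exact hg ▸ homogeneousComponent_isHomogeneous n (g i)

end MvPolynomial

theorem four_mul_le_of_mul_nonneg {R : Type*} [CommRing R] [LinearOrder R] [IsStrictOrderedRing R]
    (a b c d : R) (hbc : 0 ≤ b * c) :
    4 * (a * b * c * d) ≤ a ^ 2 * b ^ 2 + a ^ 2 * c ^ 2 + b ^ 2 * c ^ 2 + d ^ 4 := by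
  have hsos : a ^ 2 * b ^ 2 + a ^ 2 * c ^ 2 + b ^ 2 * c ^ 2 + d ^ 4 - 4 * (a * b * c * d)
      = (a * b - a * c) ^ 2 + (b * c - d ^ 2) ^ 2 + 2 * (b * c) * (a - d) ^ 2 := by ring
  linarith [sq_nonneg (a * b - a * c), sq_nonneg (b * c - d ^ 2),
    mul_nonneg hbc (sq_nonneg (a - d))]

theorem four_point_identity_of_parallelogram {M R : Type*} [AddCommGroup M] [CommRing R]
    (f : M → R)
    (hf : ∀ u v, f (u + v) + f (u - v) = 2 * f u + 2 * f v) (a b c d : M) :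
    f (a + b + c + d) + f (a + b - c - d) + f (a - b + c - d) + f (a - b - c + d)
      = 4 * (f a + f b + f c + f d) := by
  have h₁ := hf (a + b) (c + d)
  have h₂ := hf (a - b) (c - d)
  have h₃ := hf a b
  have h₄ := hf c d
  abel_nf at h₁ h₂ h₃ h₄ ⊢
  linear_combination h₁ + h₂ + 2 * h₃ + 2 * h₄

theorem eval_choiLamQ1 (v : Fin 4 → ℝ) :
    eval v ChoiLamQ1 = v 0 ^ 2 * v 1 ^ 2 + v 0 ^ 2 * v 2 ^ 2 + v 1 ^ 2 * v 2 ^ 2 + v 3 ^ 4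
      - 4 * (v 3 * v 0 * v 1 * v 2) := by
  simp [ChoiLamQ1]

theorem choiLamQ1_nonneg (v : Fin 4 → ℝ) : 0 ≤ eval v ChoiLamQ1 := by
  have h := four_mul_le_of_mul_nonneg |v 0| |v 1| |v 2| |v 3| (by positivity)
  have habs : v 3 * v 0 * v 1 * v 2 ≤ |v 0| * |v 1| * |v 2| * |v 3| := by
    calc v 3 * v 0 * v 1 * v 2 ≤ |v 3 * v 0 * v 1 * v 2| := le_abs_self _
      _ = |v 0| * |v 1| * |v 2| * |v 3| := by simp only [abs_mul]; ring
  rw [sq_abs, sq_abs, sq_abs, (show Even 4 by decide).pow_abs] at h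
  rw [eval_choiLamQ1]
  linarith

theorem isHomogeneous_choiLamQ1 : ChoiLamQ1.IsHomogeneous 4 := by
  have hsq (i j : Fin 4) : (X i ^ 2 * X j ^ 2 : MvPolynomial (Fin 4) ℝ).IsHomogeneous 4 :=
    (isHomogeneous_X_pow i 2).mul (isHomogeneous_X_pow j 2)
  have hw : (X 3 ^ 4 : MvPolynomial (Fin 4) ℝ).IsHomogeneous 4 := isHomogeneous_X_pow 3 4
  have hwxyz : (4 * (X 3 * X 0 * X 1 * X 2) : MvPolynomial (Fin 4) ℝ).IsHomogeneous 4 := by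
    rw [← map_ofNat C 4]
    exact ((((isHomogeneous_X ℝ 3).mul (isHomogeneous_X ℝ 0)).mul
      (isHomogeneous_X ℝ 1)).mul (isHomogeneous_X ℝ 2)).C_mul (4 : ℝ)
  exact ((((hsq 0 1).add (hsq 0 2)).add (hsq 1 2)).add hw).sub hwxyz

theorem apply_single_three_eq_zero_of_parallelogram (f : (Fin 4 → ℝ) → ℝ)
    (hf : ∀ u v, f (u + v) + f (u - v) = 2 * f u + 2 * f v)
    (hzero : ∀ v, eval v ChoiLamQ1 = 0 → f v = 0) : f (Pi.single 3 1) = 0 := by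
  have h := four_point_identity_of_parallelogram f hf
    (Pi.single 0 1) (Pi.single 1 1) (Pi.single 2 1) (Pi.single 3 1)
  rw [hzero _ ?_, hzero _ ?_, hzero _ ?_, hzero _ ?_, hzero _ ?_, hzero _ ?_, hzero _ ?_] at h
  · linarith
  all_goals norm_num +decide [eval_choiLamQ1]

/-- The Choi–Lam form `Q₁` is nonnegative on `ℝ⁴` but not a sum of squares. -/
theorem choiLam1_nonneg_not_sos :
    (∀ v : Fin 4 → ℝ, 0 ≤ eval v ChoiLamQ1) ∧
    ¬ ∃ (k : ℕ) (g : Fin k → MvPolynomial (Fin 4) ℝ), ChoiLamQ1 = ∑ i, (g i) ^ 2 := by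
  refine ⟨choiLamQ1_nonneg, ?_⟩
  rintro ⟨k, g, hQ⟩
  have hg : ∀ i, (g i).IsHomogeneous 2 := (hQ ▸ isHomogeneous_choiLamQ1).of_sum_sq
  have hQ_eval (v : Fin 4 → ℝ) : eval v ChoiLamQ1 = ∑ i, eval v (g i) ^ 2 := by simp [hQ]
  have hw (i : Fin k) : eval (Pi.single 3 1) (g i) = 0 :=
    apply_single_three_eq_zero_of_parallelogram (fun v => eval v (g i))
      (hg i).eval_add_add_eval_sub fun v hv =>
        (Finset.sum_sq_eq_zero_iff _ _).mp (hQ_eval v ▸ hv) i (Finset.mem_univ i)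
  have h1 := hQ_eval (Pi.single 3 1)
  simp [hw, eval_choiLamQ1] at h1
end

section
/- The first Robinson form R₁(x,y,z) = x⁶ + y⁶ + z⁶ − (x⁴y² + x⁴z² + y⁴x² + y⁴z² + z⁴x² + z⁴y²) + 3x²y²z² is nonnegative on ℝ³. -/
/-- The first Robinson form is nonnegative on `ℝ³`. -/
theorem robinson1_nonneg :
    ∀ x y z : ℝ, 0 ≤ x ^ 6 + y ^ 6 + z ^ 6
      - (x ^ 4 * y ^ 2 + x ^ 4 * z ^ 2 + y ^ 4 * x ^ 2 + y ^ 4 * z ^ 2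
          + z ^ 4 * x ^ 2 + z ^ 4 * y ^ 2)
      + 3 * x ^ 2 * y ^ 2 * z ^ 2 := by
  intro x y z
  nlinarith [sq_nonneg (x^2 - y^2), sq_nonneg (y^2 - z^2), sq_nonneg (x^2 - z^2),
    sq_nonneg (x*y - y*z), sq_nonneg (y*z - x*z), sq_nonneg (x*y - x*z),
    sq_nonneg x, sq_nonneg y, sq_nonneg z,
    sq_nonneg (x*(x^2 - y^2)), sq_nonneg (y*(y^2 - z^2)), sq_nonneg (z*(z^2 - x^2)),
    sq_nonneg (x*(x^2 - z^2)), sq_nonneg (y*(y^2 - x^2)), sq_nonneg (z*(z^2 - y^2)),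
    mul_nonneg (mul_nonneg (sq_nonneg x) (sq_nonneg y)) (sq_nonneg z)]
end

section
/- The second Robinson form R₂(x,y,z,w) = x²(x−w)² + y²(y−w)² + z²(z−w)² + 2xyz(x+y+z−2w) is nonnegative on ℝ⁴. -/
private lemma Daux1 (x y z : ℝ) (hx : 0 ≤ x) (hy : 0 ≤ y) (hz : z ≤ 0) :
    0 ≤ (x^2+y^2+z^2)*(x^4+y^4+z^4+2*x*y*z*(x+y+z)) - (x^3+y^3+z^3+2*x*y*z)^2 := by
  nlinarith [sq_nonneg (x*y*(x-y)), sq_nonneg (y*z*(y-z)+z*x*(z-x)), sq_nonneg (x*y*z),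
    mul_nonneg (mul_nonneg (mul_nonneg (mul_nonneg hx hy) (neg_nonneg.2 hz))
      (by linarith : (0:ℝ) ≤ x + y - z)) (sq_nonneg (x-y))]

private lemma Daux2 (x y z : ℝ) (hx : 0 ≤ x) (hy : 0 ≤ y) (hz : 0 ≤ z) (h : y + z ≤ x) :
    0 ≤ (x^2+y^2+z^2)*(x^4+y^4+z^4+2*x*y*z*(x+y+z)) - (x^3+y^3+z^3+2*x*y*z)^2 := by
  nlinarith [sq_nonneg (x*(y*(x-y)-z*(x-z))), sq_nonneg (y*z*(y-z)),
    mul_nonneg (mul_nonneg (mul_nonneg (mul_nonneg hx hy) hz) (mul_nonneg hy hz)) (by linarith : (0:ℝ) ≤ y + z),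
    mul_nonneg (mul_nonneg (mul_nonneg (mul_nonneg hx hy) hz) (by linarith : (0:ℝ) ≤ x - y - z))
      (by nlinarith [sq_nonneg (y-z), mul_nonneg hy hz] : (0:ℝ) ≤ y^2 - y*z + z^2)]

private lemma Daux3 (x y z : ℝ) (hx : 0 ≤ x) (hy : 0 ≤ y) (hz : 0 ≤ z)
    (h1 : x ≤ y + z) (h2 : y ≤ z + x) (h3 : z ≤ x + y) :
    0 ≤ (x^2+y^2+z^2)*(x^4+y^4+z^4+2*x*y*z*(x+y+z)) - (x^3+y^3+z^3+2*x*y*z)^2 := by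
  nlinarith [sq_nonneg (x*y*(x-y)), sq_nonneg (y*z*(y-z)), sq_nonneg (z*x*(z-x)),
    mul_nonneg (mul_nonneg (mul_nonneg (mul_nonneg (mul_nonneg hx hy) hz)
      (by linarith : (0:ℝ) ≤ x + y - z)) (by linarith : (0:ℝ) ≤ y + z - x))
      (by linarith : (0:ℝ) ≤ z + x - y)]

private lemma Dpos (x y z : ℝ) (hx : 0 ≤ x) (hy : 0 ≤ y) (hz : 0 ≤ z) :
    0 ≤ (x^2+y^2+z^2)*(x^4+y^4+z^4+2*x*y*z*(x+y+z)) - (x^3+y^3+z^3+2*x*y*z)^2 := by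
  rcases le_total (y + z) x with h | h1
  · exact Daux2 x y z hx hy hz h
  rcases le_total (z + x) y with h | h2
  · linarith [Daux2 y z x hy hz hx (by linarith)]
  rcases le_total (x + y) z with h | h3
  · linarith [Daux2 z x y hz hx hy (by linarith)]
  exact Daux3 x y z hx hy hz h1 h2 h3

private lemma Dnn (x y z : ℝ) :
    0 ≤ (x^2+y^2+z^2)*(x^4+y^4+z^4+2*x*y*z*(x+y+z)) - (x^3+y^3+z^3+2*x*y*z)^2 := by
  rcases le_total 0 x with hx | hx <;> rcases le_total 0 y with hy | hy <;>
    rcases le_total 0 z with hz | hz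
  · exact Dpos x y z hx hy hz
  · linarith [Daux1 x y z hx hy hz]
  · linarith [Daux1 z x y hz hx hy]
  · linarith [Daux1 (-y) (-z) (-x) (by linarith) (by linarith) (by linarith)]
  · linarith [Daux1 y z x hy hz hx]
  · linarith [Daux1 (-x) (-z) (-y) (by linarith) (by linarith) (by linarith)]
  · linarith [Daux1 (-x) (-y) (-z) (by linarith) (by linarith) (by linarith)]
  · linarith [Dpos (-x) (-y) (-z) (by linarith) (by linarith) (by linarith)]

/-- The second Robinson form is nonnegative on `ℝ⁴`. -/
theorem robinson2_nonneg :
    ∀ x y z w : ℝ, 0 ≤ x ^ 2 * (x - w) ^ 2 + y ^ 2 * (y - w) ^ 2 + z ^ 2 * (z - w) ^ 2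
      + 2 * x * y * z * (x + y + z - 2 * w) := by
  intro x y z w
  rcases eq_or_lt_of_le (by positivity : (0:ℝ) ≤ x^2 + y^2 + z^2) with hs | hs
  · have hx : x = 0 := by nlinarith [sq_nonneg y, sq_nonneg z, sq_nonneg x]
    have hy : y = 0 := by nlinarith [sq_nonneg y, sq_nonneg z, sq_nonneg x]
    have hz : z = 0 := by nlinarith [sq_nonneg y, sq_nonneg z, sq_nonneg x]
    subst hx; subst hy; subst hz; ring_nf; positivity
  · nlinarith [sq_nonneg ((x^2+y^2+z^2)*w - (x^3+y^3+z^3+2*x*y*z)), Dnn x y z, hs]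
end

section
/- (Cayley–Bacharach for cubics) Any ternary cubic form q ∈ H_{3,3} that vanishes on eight of the nine points of the set X = {−1,0,1} × {−1,0,1} × {1} ⊆ ℝ³ must also vanish on the ninth point. -/
open MvPolynomial

noncomputable def cbE : Fin 3 → ℝ := ![-1, 0, 1]
noncomputable def cbW : Fin 3 → ℝ := ![1, -2, 1]

lemma cb_sum (c : ℝ) (i j k : ℕ) (h : i + j + k = 3) :
    ∑ ab : Fin 3 × Fin 3, cbW ab.1 * cbW ab.2 * (c * (cbE ab.1 ^ i * cbE ab.2 ^ j * (1:ℝ) ^ k)) = 0 := by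
  simp only [one_pow, Fintype.sum_prod_type, Fin.sum_univ_three, cbE, cbW,
    Matrix.cons_val_zero, Matrix.cons_val_one, Matrix.head_cons, Matrix.cons_val_two,
    Matrix.tail_cons]
  have hi : i ≤ 3 := by omega
  have hj : j ≤ 3 - i := by omega
  clear h
  interval_cases i <;> interval_cases j <;> norm_num <;> ring

lemma cb_key (q : MvPolynomial (Fin 3) ℝ) (hq : q.IsHomogeneous 3) :
    ∑ ab : Fin 3 × Fin 3, cbW ab.1 * cbW ab.2 * eval ![cbE ab.1, cbE ab.2, 1] q = 0 := by
  simp_rw [eval_eq', Finset.mul_sum]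
  rw [Finset.sum_comm]
  apply Finset.sum_eq_zero
  intro d hd
  have h3 : d 0 + d 1 + d 2 = 3 := by
    have := hq (MvPolynomial.mem_support_iff.mp hd)
    simpa [Finsupp.weight_apply, Finsupp.sum_fintype, Fin.sum_univ_three] using this
  have := cb_sum (coeff d q) (d 0) (d 1) (d 2) h3
  rw [← this]
  apply Finset.sum_congr rfl
  intro ab _
  simp [Fin.prod_univ_three]

lemma cbE_inj : Function.Injective cbE := by
  intro x y hxy
  fin_cases x <;> fin_cases y <;> simp_all [cbE] <;> norm_num at hxy

/-- Cayley–Bacharach for cubics: a ternary cubic form vanishing on eight of the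
nine points of `{−1,0,1} × {−1,0,1} × {1}` also vanishes on the ninth. -/
theorem cayley_bacharach_cubics (q : MvPolynomial (Fin 3) ℝ) (hq : q.IsHomogeneous 3)
    (X9 : Set (Fin 3 → ℝ))
    (hX9 : X9 = {v | (v 0 = -1 ∨ v 0 = 0 ∨ v 0 = 1) ∧ (v 1 = -1 ∨ v 1 = 0 ∨ v 1 = 1) ∧ v 2 = 1})
    (p₀ : Fin 3 → ℝ) (hp₀ : p₀ ∈ X9)
    (hvan : ∀ p ∈ X9, p ≠ p₀ → eval p q = 0) :
    eval p₀ q = 0 := by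
  rw [hX9] at hp₀
  obtain ⟨hx, hy, hz2⟩ := hp₀
  obtain ⟨i, hi⟩ : ∃ i : Fin 3, cbE i = p₀ 0 := by
    rcases hx with h | h | h
    exacts [⟨0, by simp [cbE, h]⟩, ⟨1, by simp [cbE, h]⟩, ⟨2, by simp [cbE, h]⟩]
  obtain ⟨j, hj⟩ : ∃ j : Fin 3, cbE j = p₀ 1 := by
    rcases hy with h | h | h
    exacts [⟨0, by simp [cbE, h]⟩, ⟨1, by simp [cbE, h]⟩, ⟨2, by simp [cbE, h]⟩]
  have hp : p₀ = ![cbE i, cbE j, 1] := by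
    funext t
    fin_cases t <;> simp [hi, hj, hz2]
  have hmem : ∀ a : Fin 3, cbE a = -1 ∨ cbE a = 0 ∨ cbE a = 1 := by
    intro a; fin_cases a <;> norm_num [cbE]
  have hz : ∀ ab : Fin 3 × Fin 3, ab ∈ (Finset.univ : Finset (Fin 3 × Fin 3)) → ab ≠ (i, j) →
      cbW ab.1 * cbW ab.2 * eval ![cbE ab.1, cbE ab.2, 1] q = 0 := by
    intro ab _ hne
    rw [hvan _ ?_ ?_, mul_zero]
    · rw [hX9]
      exact ⟨by simpa using hmem ab.1, by simpa using hmem ab.2, rfl⟩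
    · intro h
      rw [hp] at h
      apply hne
      have h0 := congrFun h 0
      have h1 := congrFun h 1
      simp only [Matrix.cons_val_zero, Matrix.cons_val_one, Matrix.head_cons] at h0 h1
      exact Prod.ext (cbE_inj h0) (cbE_inj h1)
  have key := cb_key q hq
  rw [Finset.sum_eq_single (i, j) hz (by simp)] at key
  rw [← hp] at key
  have hwi : cbW i ≠ 0 := by fin_cases i <;> norm_num [cbW]
  have hwj : cbW j ≠ 0 := by fin_cases j <;> norm_num [cbW]
  rcases mul_eq_zero.mp key with h | h
  · exact absurd h (mul_ne_zero hwi hwj)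
  · exact h
end

section
/- Let f ∈ H_{n,2d} satisfy f ∉ Σ_{n,2d} + C_{n,2d}. Then for every ℓ ∈ ℕ, the form x₁^{2ℓ}·f is not in Σ_{n,2d+2ℓ} + C_{n,2d+2ℓ}. -/
open MvPolynomial

/-- Embed an exponent vector into `ℝⁿ`. -/
def expToVec {n : ℕ} (α : Fin n →₀ ℕ) : Fin n → ℝ := fun i => (α i : ℝ)

/-- `h` is a nonnegative circuit form of degree `d` in `n` variables: it is
homogeneous of degree `d`, nonnegative, its support consists of a set `S` of
affinely independent even exponent vectors with positive coefficients
(the outer terms), possibly together with one additional exponent `β` lying in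
the relative interior of the convex hull of `S` (the inner term). -/
def IsNonnegCircuit {n : ℕ} (d : ℕ) (h : MvPolynomial (Fin n) ℝ) : Prop :=
  h.IsHomogeneous d ∧ (∀ x : Fin n → ℝ, 0 ≤ eval x h) ∧
  ∃ S : Finset (Fin n →₀ ℕ),
    (∀ α ∈ S, (∀ i, Even (α i)) ∧ 0 < coeff α h) ∧
    AffineIndependent ℝ (fun a : {α : (Fin n →₀ ℕ) // α ∈ S} => expToVec a.1) ∧
    ((h.support : Set (Fin n →₀ ℕ)) = ↑S ∨
      ∃ β : Fin n →₀ ℕ, β ∉ S ∧ (h.support : Set (Fin n →₀ ℕ)) = insert β ↑S ∧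
        expToVec β ∈ intrinsicInterior ℝ (convexHull ℝ (expToVec '' ↑S)))

/-- `f` is a sum of squares of forms of degree `d` (hence a form of degree `2d`). -/
def IsSOSForm {n : ℕ} (d : ℕ) (f : MvPolynomial (Fin n) ℝ) : Prop :=
  ∃ (k : ℕ) (g : Fin k → MvPolynomial (Fin n) ℝ),
    (∀ i, (g i).IsHomogeneous d) ∧ f = ∑ i, (g i) ^ 2

/-- `f` is a sum of nonnegative circuit forms of degree `d` (SONC). -/
def IsSONC {n : ℕ} (d : ℕ) (f : MvPolynomial (Fin n) ℝ) : Prop :=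
  ∃ (k : ℕ) (h : Fin k → MvPolynomial (Fin n) ℝ),
    (∀ i, IsNonnegCircuit d (h i)) ∧ f = ∑ i, h i

/-! Induction on `ℓ`. Suppose `x₁² f = ∑ gⱼ² + ∑ cⱼ` with forms `gⱼ` and nonnegative circuits
`cⱼ`. Every term is nonnegative, so every term vanishes on the hyperplane `x₁ = 0`; hence
`x₁ ∣ gⱼ`, and every exponent in the support of `cⱼ` has positive `x₁`-degree. For the outer
exponents, which are even, this degree is then at least `2`, and so it is for the inner exponent,
which is a convex combination of them. Thus `cⱼ = x₁² cⱼ'`, where `cⱼ'` is again a circuit: its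
support is a translate of that of `cⱼ`, and it is nonnegative on the dense set `x₁ ≠ 0`. Cancelling
`x₁²` gives a decomposition of `f` in degree two lower. -/

namespace MvPolynomial

variable {R σ : Type*}

theorem X_pow_dvd_iff_le [CommSemiring R] {i : σ} {k : ℕ} {p : MvPolynomial σ R} :
    X i ^ k ∣ p ↔ ∀ α ∈ p.support, k ≤ α i := by
  rw [X_pow_eq_monomial, monomial_one_dvd_iff_modMonomial_eq_zero, MvPolynomial.ext_iff]
  refine forall_congr' fun α => ?_
  by_cases hα : Finsupp.single i k ≤ α
  · simp [coeff_modMonomial_of_le _ hα, Finsupp.single_le_iff.mp hα]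
  · rw [Finsupp.single_le_iff] at hα
    simp [coeff_modMonomial_of_not_le _ (Finsupp.single_le_iff.not.mpr hα), hα]

theorem X_dvd_of_eval_eq_zero [CommRing R] [IsDomain R] [Infinite R] {i : σ}
    {p : MvPolynomial σ R} (h : ∀ x : σ → R, x i = 0 → eval x p = 0) : X i ∣ p := by
  classical
  set r := p.modMonomial (Finsupp.single i 1)
  have hr : i ∉ r.vars := by
    rw [mem_vars_iff_mem_support]
    rintro ⟨α, hα, hαi⟩
    rw [mem_support_iff, coeff_modMonomial_of_le] at hα
    · exact hα rfl
    · simpa [Nat.one_le_iff_ne_zero] using hαi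
  rw [X_dvd_iff_modMonomial_eq_zero]
  refine MvPolynomial.funext fun x => ?_
  have hx : eval x r = eval (Function.update x i 0) r :=
    eval₂Hom_congr' rfl
      (fun j hj _ => by rw [Function.update_of_ne (ne_of_mem_of_not_mem hj hr)]) rfl
  have hr_eq : r = p - X i * p.divMonomial (Finsupp.single i 1) :=
    eq_sub_of_add_eq' (divMonomial_add_modMonomial_single p i)
  rw [map_zero, hx, hr_eq, map_sub, map_mul, h _ (Function.update_self ..), eval_X,
    Function.update_self, zero_mul, sub_zero]

theorem support_X_pow_mul [CommSemiring R] (i : σ) (k : ℕ) (p : MvPolynomial σ R) :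
    (X i ^ k * p).support = p.support.map (addLeftEmbedding (Finsupp.single i k)) := by
  rw [X_pow_eq_monomial]
  exact AddMonoidAlgebra.support_coeff_single_mul p 1 (by simp) _

theorem IsHomogeneous.of_X_pow_mul [CommSemiring R] {i : σ} {k m : ℕ} {q : MvPolynomial σ R}
    (h : (X i ^ k * q).IsHomogeneous (m + k)) : q.IsHomogeneous m := by
  classical
  intro α hα
  have hw := @h (Finsupp.single i k + α) (by rwa [X_pow_eq_monomial, coeff_monomial_mul, one_mul])
  simp only [map_add, Finsupp.weight_single, Pi.one_apply, smul_eq_mul, mul_one] at hw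
  omega

theorem eval_nonneg_of_X_pow_mul {i : σ} {k : ℕ} (hk : Even k) {q : MvPolynomial σ ℝ}
    (h : ∀ x, 0 ≤ eval x (X i ^ k * q)) (x : σ → ℝ) : 0 ≤ eval x q := by
  have hdense : Dense {x : σ → ℝ | x i ≠ 0} :=
    (dense_compl_singleton (0 : ℝ)).preimage (isOpenMap_eval i)
  have hpos : ∀ y ∈ {x : σ → ℝ | x i ≠ 0}, 0 ≤ eval y q := fun y hy => by
    have := h y
    rw [map_mul, map_pow, eval_X] at this
    exact nonneg_of_mul_nonneg_right this (hk.pow_pos hy)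
  exact closure_minimal hpos (isClosed_le continuous_const (continuous_eval q))
    (hdense.closure_eq ▸ Set.mem_univ x)

end MvPolynomial

section expToVec

variable {n : ℕ}

theorem expToVec_add (α β : Fin n →₀ ℕ) : expToVec (α + β) = expToVec α + expToVec β := by
  funext j
  simp [expToVec]

theorem image_expToVec_map_addLeftEmbedding (s : Fin n →₀ ℕ) (T : Finset (Fin n →₀ ℕ)) :
    expToVec '' ↑(T.map (addLeftEmbedding s)) =
      AffineEquiv.constVAdd ℝ (Fin n → ℝ) (expToVec s) '' (expToVec '' ↑T) := by
  rw [Finset.coe_map, ← Set.image_comp, ← Set.image_comp]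
  exact Set.image_congr fun α _ => expToVec_add s α

theorem AffineIndependent.of_expToVec_map_addLeftEmbedding {s : Fin n →₀ ℕ}
    {T : Finset (Fin n →₀ ℕ)}
    (h : AffineIndependent ℝ fun a : {α // α ∈ T.map (addLeftEmbedding s)} => expToVec a.1) :
    AffineIndependent ℝ fun a : {α // α ∈ T} => expToVec a.1 := by
  refine (affineIndependent_vadd (k := ℝ) (v := expToVec s)).mp ?_
  convert h.comp_embedding ((addLeftEmbedding s).subtypeMap fun _ => Finset.mem_map_of_mem _)
    using 1
  funext a
  exact (expToVec_add s a.1).symm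

end expToVec

namespace IsNonnegCircuit

variable {n D : ℕ} {i : Fin n}

theorem X_sq_dvd_of_X_dvd {c : MvPolynomial (Fin n) ℝ} (hc : IsNonnegCircuit D c)
    (hX : X i ∣ c) : X i ^ 2 ∣ c := by
  obtain ⟨-, -, S, hS, -, hsupp⟩ := hc
  rw [← pow_one (X i), X_pow_dvd_iff_le] at hX
  have houter : ∀ α ∈ S, 2 ≤ α i := fun α hα => by
    have h1 := hX α (mem_support_iff.mpr (hS α hα).2.ne')
    obtain ⟨r, hr⟩ := (hS α hα).1 i
    omega
  have hhull : convexHull ℝ (expToVec '' ↑S) ⊆ {y | (2 : ℝ) ≤ y i} :=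
    convexHull_min (by rintro _ ⟨α, hα, rfl⟩; exact (Nat.ofNat_le_cast (α := ℝ)).mpr (houter α hα))
      (convex_halfSpace_ge ⟨fun _ _ => rfl, fun _ _ => rfl⟩ 2)
  rw [X_pow_dvd_iff_le]
  intro α hα
  rcases hsupp with hsupp | ⟨β, -, hsupp, hβ⟩
  · exact houter α (Finset.coe_inj.mp hsupp ▸ hα)
  · obtain rfl | hαS := (hsupp ▸ Finset.mem_coe.mpr hα : α ∈ insert β (S : Set _))
    · exact (Nat.ofNat_le_cast (α := ℝ)).mp (hhull (intrinsicInterior_subset hβ))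
    · exact houter α hαS

theorem of_X_pow_mul {k : ℕ} (hk : Even k) {q : MvPolynomial (Fin n) ℝ}
    (h : IsNonnegCircuit (D + k) (X i ^ k * q)) : IsNonnegCircuit D q := by
  obtain ⟨hhom, hnonneg, S, hS, haff, hsupp⟩ := h
  set e := addLeftEmbedding (Finsupp.single i k)
  have hcoeff : ∀ α, coeff (e α) (X i ^ k * q) = coeff α q := fun α => by
    rw [X_pow_eq_monomial, addLeftEmbedding_apply, coeff_monomial_mul, one_mul]
  obtain ⟨S', -, rfl⟩ := Finset.subset_map_iff.mp (support_X_pow_mul i k q ▸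
    fun α hα => mem_support_iff.mpr (hS α hα).2.ne' : S ⊆ q.support.map e)
  have hs_even : ∀ j, Even (Finsupp.single i k j) := fun j => by
    rw [Finsupp.single_apply]
    split_ifs
    exacts [hk, ⟨0, rfl⟩]
  refine ⟨hhom.of_X_pow_mul, eval_nonneg_of_X_pow_mul hk hnonneg, S', fun α hα => ?_,
    haff.of_expToVec_map_addLeftEmbedding, ?_⟩
  · obtain ⟨heven, hpos⟩ := hS (e α) (Finset.mem_map_of_mem e hα)
    exact ⟨fun j => (Nat.even_add.mp (heven j)).mp (hs_even j), hcoeff α ▸ hpos⟩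
  rw [support_X_pow_mul] at hsupp
  rcases hsupp with hsupp | ⟨β, hβS, hsupp, hβ⟩
  · left
    rw [Finset.coe_inj, Finset.map_inj] at hsupp
    rw [hsupp]
  · right
    obtain ⟨β', -, rfl⟩ := Finset.mem_map.mp (Finset.mem_coe.mp (hsupp ▸ Set.mem_insert _ _))
    refine ⟨β', fun h => hβS (Finset.mem_map_of_mem e h), ?_, ?_⟩
    · rw [← Finset.coe_insert, ← Finset.map_insert, Finset.coe_inj, Finset.map_inj] at hsupp
      rw [hsupp, Finset.coe_insert]
    · rw [image_expToVec_map_addLeftEmbedding, ← AffineEquiv.coe_toAffineMap,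
        ← AffineMap.image_convexHull, AffineEquiv.coe_toAffineMap,
        AffineEquiv.intrinsicInterior_image, addLeftEmbedding_apply, expToVec_add] at hβ
      exact (AffineEquiv.injective _).mem_set_image.mp hβ

end IsNonnegCircuit

def IsSOSAddSONC {n : ℕ} (d D : ℕ) (f : MvPolynomial (Fin n) ℝ) : Prop :=
  ∃ g c : MvPolynomial (Fin n) ℝ, IsSOSForm d g ∧ IsSONC D c ∧ f = g + c

namespace IsSOSAddSONC

variable {n d D : ℕ} {i : Fin n} {f : MvPolynomial (Fin n) ℝ}

theorem of_X_sq_mul (h : IsSOSAddSONC (d + 1) (D + 2) (X i ^ 2 * f)) : IsSOSAddSONC d D f := by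
  obtain ⟨_, _, ⟨k, g, hg, rfl⟩, ⟨l, c, hc, rfl⟩, hf⟩ := h
  have hvanish : ∀ x : Fin n → ℝ, x i = 0 →
      (∀ j, eval x (g j) = 0) ∧ ∀ j, eval x (c j) = 0 := by
    intro x hx
    have hsq : ∀ j ∈ Finset.univ, 0 ≤ eval x (g j) ^ 2 := fun j _ => sq_nonneg _
    have hcirc : ∀ j ∈ Finset.univ, 0 ≤ eval x (c j) := fun j _ => (hc j).2.1 x
    have hzero : ∑ j, eval x (g j) ^ 2 + ∑ j, eval x (c j) = 0 := by
      simpa [hx] using (congrArg (eval x) hf).symm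
    rw [add_eq_zero_iff_of_nonneg (Finset.sum_nonneg hsq) (Finset.sum_nonneg hcirc),
      Finset.sum_eq_zero_iff_of_nonneg hsq, Finset.sum_eq_zero_iff_of_nonneg hcirc] at hzero
    exact ⟨fun j => pow_eq_zero_iff two_ne_zero |>.mp (hzero.1 j (Finset.mem_univ j)),
      fun j => hzero.2 j (Finset.mem_univ j)⟩
  choose g' hg' using fun j => X_dvd_of_eval_eq_zero fun x hx => (hvanish x hx).1 j
  choose c' hc' using fun j =>
    (hc j).X_sq_dvd_of_X_dvd (X_dvd_of_eval_eq_zero fun x hx => (hvanish x hx).2 j)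
  refine ⟨_, _, ⟨k, g', fun j => ?_, rfl⟩, ⟨l, c', fun j => ?_, rfl⟩, ?_⟩
  · exact IsHomogeneous.of_X_pow_mul (i := i) (k := 1) (by rw [pow_one, ← hg' j]; exact hg j)
  · exact IsNonnegCircuit.of_X_pow_mul even_two (by rw [← hc' j]; exact hc j)
  · refine mul_left_cancel₀ (pow_ne_zero 2 (X_ne_zero i)) ?_
    simp only [hf, hg', hc', mul_add, Finset.mul_sum, mul_pow]

theorem of_X_pow_mul :
    ∀ m, IsSOSAddSONC (d + m) (D + 2 * m) (X i ^ (2 * m) * f) → IsSOSAddSONC d D f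
  | 0, h => by simpa using h
  | m + 1, h => by
    rw [show X i ^ (2 * (m + 1)) * f = X i ^ 2 * (X i ^ (2 * m) * f) by ring] at h
    exact of_X_pow_mul m (of_X_sq_mul h)

end IsSOSAddSONC

theorem sos_plus_sonc_reduction_degree_general (n d : ℕ) (hn : 0 < n) (f : MvPolynomial (Fin n) ℝ)
    (hnot : ¬ ∃ g c : MvPolynomial (Fin n) ℝ, IsSOSForm d g ∧ IsSONC (2 * d) c ∧ f = g + c) :
    ∀ ℓ : ℕ, 0 < ℓ →
      ¬ ∃ g c : MvPolynomial (Fin n) ℝ,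
        IsSOSForm (d + ℓ) g ∧ IsSONC (2 * d + 2 * ℓ) c ∧
          X (⟨0, hn⟩ : Fin n) ^ (2 * ℓ) * f = g + c :=
  fun ℓ _ h => hnot (IsSOSAddSONC.of_X_pow_mul ℓ h)

/-- Reduction strategy (degree): if a form `f ∈ H_{n,2d}` is not SOS+SONC, then for
every `ℓ ≥ 1` the form `x₁^{2ℓ}·f` is not in `Σ_{n,2d+2ℓ} + C_{n,2d+2ℓ}`. -/
theorem sos_plus_sonc_reduction_degree (n d : ℕ) (hn : 0 < n) (f : MvPolynomial (Fin n) ℝ)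
    (hf : f.IsHomogeneous (2 * d))
    (hnot : ¬ ∃ g c : MvPolynomial (Fin n) ℝ, IsSOSForm d g ∧ IsSONC (2 * d) c ∧ f = g + c) :
    ∀ ℓ : ℕ, 0 < ℓ →
      ¬ ∃ g c : MvPolynomial (Fin n) ℝ,
        IsSOSForm (d + ℓ) g ∧ IsSONC (2 * d + 2 * ℓ) c ∧
          X (⟨0, hn⟩ : Fin n) ^ (2 * ℓ) * f = g + c :=
  sos_plus_sonc_reduction_degree_general n d hn f hnot
end

section
/- Let f ∈ H_{n,2d} satisfy f ∉ Σ_{n,2d} + C_{n,2d}. Then, regarded as a form in n+m variables (not involving the new variables), f is not in Σ_{n+m,2d} + C_{n+m,2d} for any m ∈ ℕ. -/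
open MvPolynomial

/-! Setting the new variables to zero (`MvPolynomial.killCompl`) is an algebra map that is left
inverse to the inclusion and preserves homogeneity, so it sends a decomposition of `f` in
`n + m` variables to one in `n` variables once it is known to map nonnegative circuit forms to
nonnegative circuit forms. Outer exponents involving a new variable are simply dropped, and a
subfamily of an affinely independent family stays affinely independent. If the inner exponent
survives, every new coordinate is a nonnegative affine functional on the simplex of outer
exponents vanishing at a point of its relative interior, hence vanishing on the whole simplex:
then no outer exponent is dropped and the circuit keeps its shape. -/

open Filter Topology in
theorem exists_lineMap_mem_of_mem_intrinsicInterior {E : Type*} [NormedAddCommGroup E]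
    [NormedSpace ℝ E] {K : Set E} {x v : E} (hx : x ∈ intrinsicInterior ℝ K) (hv : v ∈ K) :
    ∃ t : ℝ, 1 < t ∧ AffineMap.lineMap v x t ∈ K := by
  obtain ⟨y, hy, rfl⟩ := mem_intrinsicInterior.mp hx
  let c : ℝ → affineSpan ℝ K := fun t =>
    ⟨AffineMap.lineMap v y t, AffineMap.lineMap_mem t (subset_affineSpan ℝ K hv) y.2⟩
  have hc : Continuous c := AffineMap.lineMap_continuous.subtype_mk _
  have hc1 : c 1 = y := Subtype.ext (AffineMap.lineMap_apply_one _ _)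
  have hnear : ∀ᶠ t in 𝓝[>] (1 : ℝ), c t ∈ interior (((↑) : affineSpan ℝ K → E) ⁻¹' K) :=
    eventually_nhdsWithin_of_eventually_nhds
      (hc.continuousAt.preimage_mem_nhds (hc1 ▸ isOpen_interior.mem_nhds hy))
  obtain ⟨t, ht, ht1⟩ := (hnear.and self_mem_nhdsWithin).exists
  exact ⟨t, ht1, interior_subset (s := Subtype.val ⁻¹' K) ht⟩

theorem AffineMap.eq_zero_of_nonneg_of_mem_intrinsicInterior {E : Type*} [NormedAddCommGroup E]
    [NormedSpace ℝ E] {K : Set E} (φ : E →ᵃ[ℝ] ℝ) (hφ : ∀ y ∈ K, 0 ≤ φ y) {x v : E}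
    (hx : x ∈ intrinsicInterior ℝ K) (hx0 : φ x = 0) (hv : v ∈ K) : φ v = 0 := by
  obtain ⟨t, ht1, htK⟩ := exists_lineMap_mem_of_mem_intrinsicInterior hx hv
  have hval : φ (AffineMap.lineMap v x t) = (1 - t) * φ v := by
    rw [AffineMap.apply_lineMap, AffineMap.lineMap_apply_module, hx0, smul_zero, add_zero,
      smul_eq_mul]
  nlinarith [hφ _ htK, hφ v hv]

noncomputable def extendByZeroIsometry {ι η : Type*} [Fintype ι] [Fintype η] {s : ι → η}
    (hs : Function.Injective s) : (ι → ℝ) →ₗᵢ[ℝ] (η → ℝ) where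
  __ := Function.ExtendByZero.linearMap ℝ s
  norm_map' v := by
    refine le_antisymm ((pi_norm_le_iff_of_nonneg (norm_nonneg v)).2 fun j => ?_)
      ((pi_norm_le_iff_of_nonneg (norm_nonneg _)).2 fun i => ?_)
    · by_cases hj : j ∈ Set.range s
      · obtain ⟨i, rfl⟩ := hj
        simpa [hs.extend_apply] using norm_le_pi_norm v i
      · simp [Function.extend_apply' _ _ _ (by simpa using hj)]
    · change ‖v i‖ ≤ ‖Function.extend s v 0‖
      simpa [hs.extend_apply] using norm_le_pi_norm (Function.extend s v 0) (s i)

section Exponents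

variable {n N : ℕ} {ι : Fin n → Fin N}

theorem expToVec_mapDomain (hι : Function.Injective ι) (α : Fin n →₀ ℕ) :
    expToVec (α.mapDomain ι) = extendByZeroIsometry hι (expToVec α) := by
  funext j
  by_cases hj : j ∈ Set.range ι
  · obtain ⟨i, rfl⟩ := hj
    simp [expToVec, extendByZeroIsometry, Finsupp.mapDomain_apply hι, hι.extend_apply]
  · simp [expToVec, extendByZeroIsometry, Finsupp.mapDomain_of_notMem_range _ _ hj,
      Function.extend_apply' _ _ _ (by simpa using hj)]

theorem eq_zero_of_expToVec_mem_intrinsicInterior {S : Set (Fin N →₀ ℕ)} {β : Fin N →₀ ℕ}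
    (hβ : expToVec β ∈ intrinsicInterior ℝ (convexHull ℝ (expToVec '' S))) {j : Fin N}
    (hj : β j = 0) {α : Fin N →₀ ℕ} (hα : α ∈ S) : α j = 0 := by
  let φ := (LinearMap.proj j : (Fin N → ℝ) →ₗ[ℝ] ℝ).toAffineMap
  have hφ : convexHull ℝ (expToVec '' S) ⊆ φ ⁻¹' Set.Ici 0 :=
    convexHull_min (by rintro _ ⟨γ, -, rfl⟩; exact Nat.cast_nonneg (α := ℝ) (γ j))
      ((convex_Ici 0).affine_preimage φ)
  have := φ.eq_zero_of_nonneg_of_mem_intrinsicInterior (fun y hy => hφ hy) hβ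
    (by simp [φ, expToVec, hj]) (subset_convexHull ℝ _ ⟨α, hα, rfl⟩)
  simpa [φ, expToVec] using this

theorem expToVec_mem_intrinsicInterior_of_mapDomain (hι : Function.Injective ι)
    {T : Set (Fin n →₀ ℕ)} {β : Fin n →₀ ℕ}
    (hβ : expToVec (β.mapDomain ι) ∈
      intrinsicInterior ℝ (convexHull ℝ (expToVec '' (Finsupp.mapDomain ι '' T)))) :
    expToVec β ∈ intrinsicInterior ℝ (convexHull ℝ (expToVec '' T)) := by
  let L := (extendByZeroIsometry hι).toAffineIsometry
  have himage : expToVec '' (Finsupp.mapDomain ι '' T) = L '' (expToVec '' T) := by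
    simp only [Set.image_image, expToVec_mapDomain hι]
    rfl
  rw [himage, ← L.coe_toAffineMap, ← AffineMap.image_convexHull, L.coe_toAffineMap,
    L.intrinsicInterior_image, expToVec_mapDomain hι] at hβ
  exact L.injective.mem_set_image.mp hβ

theorem affineIndependent_expToVec_preimage_mapDomain (hι : Function.Injective ι)
    {S : Finset (Fin N →₀ ℕ)}
    (hS : AffineIndependent ℝ (fun a : {α // α ∈ S} => expToVec a.1)) :
    AffineIndependent ℝ (fun a : {α // α ∈ S.preimage (Finsupp.mapDomain ι)
      (Finsupp.mapDomain_injective hι).injOn} => expToVec a.1) := by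
  let e : {α // α ∈ S.preimage _ (Finsupp.mapDomain_injective hι).injOn} ↪ {α // α ∈ S} :=
    ⟨fun a => ⟨a.1.mapDomain ι, Finset.mem_preimage.mp a.2⟩,
      fun a b hab => Subtype.ext (Finsupp.mapDomain_injective hι (congrArg Subtype.val hab))⟩
  refine AffineIndependent.of_comp (extendByZeroIsometry hι).toAffineIsometry.toAffineMap ?_
  have hcomp : (extendByZeroIsometry hι).toAffineIsometry.toAffineMap ∘
      (fun a : {α // α ∈ S.preimage _ _} => expToVec a.1) = (fun a => expToVec a.1) ∘ e :=
    funext fun a => (expToVec_mapDomain hι a.1).symm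
  exact hcomp ▸ hS.comp_embedding e

end Exponents

section KillCompl

variable {σ τ R : Type*} [CommSemiring R] {ι : σ → τ} (hι : Function.Injective ι)

theorem MvPolynomial.IsHomogeneous.killCompl {p : MvPolynomial τ R} {D : ℕ}
    (hp : p.IsHomogeneous D) : (killCompl hι p).IsHomogeneous D := fun s hs => by
  rw [coeff_killCompl] at hs
  simpa [Finsupp.weight_apply, Finsupp.sum_mapDomain_index] using hp hs

theorem MvPolynomial.eval_killCompl (x : σ → R) (p : MvPolynomial τ R) :
    eval x (killCompl hι p) = eval (Function.extend ι x 0) p := by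
  rw [← coe_aeval_eq_eval, ← coe_aeval_eq_eval]
  change ((aeval x).comp (killCompl hι)) p = aeval (Function.extend ι x 0) p
  congr 1
  refine algHom_ext fun j => ?_
  by_cases hj : j ∈ Set.range ι
  · obtain ⟨i, rfl⟩ := hj
    rw [AlgHom.comp_apply, ← rename_X, killCompl_rename_app]
    simp [hι.extend_apply]
  · simp [MvPolynomial.killCompl, hj, Function.extend_apply' _ _ _ (by simpa using hj)]

end KillCompl

section Cones

variable {n N : ℕ} {ι : Fin n → Fin N} (hι : Function.Injective ι)

theorem IsSOSForm.killCompl {d : ℕ} {p : MvPolynomial (Fin N) ℝ} (hp : IsSOSForm d p) :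
    IsSOSForm d (MvPolynomial.killCompl hι p) := by
  obtain ⟨k, g, hg, rfl⟩ := hp
  exact ⟨k, fun i => MvPolynomial.killCompl hι (g i), fun i => (hg i).killCompl hι, by simp⟩

theorem IsNonnegCircuit.killCompl {D : ℕ} {h : MvPolynomial (Fin N) ℝ}
    (hc : IsNonnegCircuit D h) : IsNonnegCircuit D (MvPolynomial.killCompl hι h) := by
  obtain ⟨hhom, hnn, S, hS, haff, hsupp⟩ := hc
  have hinj := Finsupp.mapDomain_injective (M := ℕ) hι
  refine ⟨hhom.killCompl hι, fun x => (eval_killCompl hι x h).symm ▸ hnn _,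
    S.preimage _ hinj.injOn, fun α hα => ?_, affineIndependent_expToVec_preimage_mapDomain hι haff,
    ?_⟩
  · obtain ⟨heven, hpos⟩ := hS _ (Finset.mem_preimage.mp hα)
    exact ⟨fun i => by simpa [Finsupp.mapDomain_apply hι] using heven (ι i),
      by rwa [coeff_killCompl]⟩
  rw [support_killCompl, Finset.coe_preimage, Finset.coe_preimage]
  rcases hsupp with hsupp | ⟨β, hβS, hsupp, hβ⟩
  · exact Or.inl (by rw [hsupp])
  by_cases hβrange : β ∈ Set.range (Finsupp.mapDomain ι)
  · obtain ⟨β', rfl⟩ := hβrange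
    have hSrange : (S : Set _) ⊆ Set.range (Finsupp.mapDomain ι) := fun α hα =>
      (Finsupp.mem_range_mapDomain_iff _ hι α).2 fun j hj =>
        eq_zero_of_expToVec_mem_intrinsicInterior hβ
          (Finsupp.mapDomain_of_notMem_range _ _ hj) hα
    have hSimage := Set.image_preimage_eq_of_subset hSrange
    refine Or.inr ⟨β', fun hβ' => hβS (Finset.mem_preimage.mp hβ'), ?_, ?_⟩
    · rw [hsupp]
      conv_lhs => rw [← hSimage, ← Set.image_insert_eq, Set.preimage_image_eq _ hinj]
    · rw [← hSimage] at hβ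
      exact expToVec_mem_intrinsicInterior_of_mapDomain hι hβ
  · left
    rw [hsupp, Set.insert_eq, Set.preimage_union, Set.preimage_singleton_eq_empty.mpr hβrange,
      Set.empty_union]

theorem IsSONC.killCompl {D : ℕ} {p : MvPolynomial (Fin N) ℝ} (hp : IsSONC D p) :
    IsSONC D (MvPolynomial.killCompl hι p) := by
  obtain ⟨k, c, hc, rfl⟩ := hp
  exact ⟨k, fun i => MvPolynomial.killCompl hι (c i), fun i => (hc i).killCompl hι, map_sum _ _ _⟩

end Cones

theorem sos_plus_sonc_reduction_variables_general (n d : ℕ) (f : MvPolynomial (Fin n) ℝ)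
    (hnot : ¬ ∃ g c : MvPolynomial (Fin n) ℝ, IsSOSForm d g ∧ IsSONC (2 * d) c ∧ f = g + c) :
    ∀ m : ℕ, 0 < m →
      ¬ ∃ g c : MvPolynomial (Fin (n + m)) ℝ,
        IsSOSForm d g ∧ IsSONC (2 * d) c ∧
          rename (Fin.castAdd m) f = g + c := by
  rintro m - ⟨g, c, hg, hc, hfgc⟩
  have hι := Fin.castAdd_injective n m
  refine hnot ⟨killCompl hι g, killCompl hι c, hg.killCompl hι, hc.killCompl hι, ?_⟩
  rw [← map_add, ← hfgc, killCompl_rename_app]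

/-- Reduction strategy (variables): if a form `f ∈ H_{n,2d}` is not SOS+SONC, then,
regarded as a form in `n+m` variables via the natural inclusion, it is not in
`Σ_{n+m,2d} + C_{n+m,2d}` for any `m ≥ 1`. -/
theorem sos_plus_sonc_reduction_variables (n d : ℕ) (f : MvPolynomial (Fin n) ℝ)
    (hf : f.IsHomogeneous (2 * d))
    (hnot : ¬ ∃ g c : MvPolynomial (Fin n) ℝ, IsSOSForm d g ∧ IsSONC (2 * d) c ∧ f = g + c) :
    ∀ m : ℕ, 0 < m →
      ¬ ∃ g c : MvPolynomial (Fin (n + m)) ℝ,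
        IsSOSForm d g ∧ IsSONC (2 * d) c ∧
          rename (Fin.castAdd m) f = g + c :=
  sos_plus_sonc_reduction_variables_general n d f hnot
end

section
/- The form f = (1/2)(z³ + 2xyz + x²y)² + M(x,y,z), where M is the Motzkin form, is not a sum of squares of real forms of degree 3. -/
/-!
If `f = ∑ gᵢ²`, then for a vertex `e` of the convex hull of the exponents occurring in the `gᵢ`,
the coefficient of `x^(2e)` in `f` is `∑ coeff_e(gᵢ)²`, because `2e` has no other decomposition
as a sum of two such exponents. Starting from all exponents of degree `3`, the vanishing of the
coefficients of `x⁶, y⁶, x⁴z², y⁴z², x²z⁴, y²z⁴` in `f` peels off `x³, y³, x²z, y²z, xz², yz²`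
one vertex at a time, leaving `x²y, xy², xyz, z³`. Among these `xyz` is again such a vertex, so
the coefficient `-1` of `x²y²z²` in `f` would be a sum of squares.
-/

open MvPolynomial

/-- Every vertex of the convex hull of `S` is a doubling vertex of `S`. -/
def IsDoublingVertex {M : Type*} [Add M] (S : Set M) (e : M) : Prop :=
  ∀ a ∈ S, ∀ b ∈ S, a + b = e + e → a = e

namespace MvPolynomial

variable {σ R ι : Type*} [Fintype ι] {S : Set (σ →₀ ℕ)} {e : σ →₀ ℕ}

theorem coeff_add_self_sq_of_isDoublingVertex [CommSemiring R] {g : MvPolynomial σ R}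
    (hg : ↑g.support ⊆ S) (he : IsDoublingVertex S e) :
    coeff (e + e) (g ^ 2) = coeff e g ^ 2 := by
  classical
  rw [sq, sq, coeff_mul]
  refine Finset.sum_eq_single_of_mem (e, e) (Finset.HasAntidiagonal.mem_antidiagonal.2 rfl) ?_
  rintro ⟨a, b⟩ hab hne
  rw [Finset.HasAntidiagonal.mem_antidiagonal] at hab
  dsimp only at hab ⊢
  by_contra h
  obtain rfl : a = e :=
    he a (hg (mem_support_iff.2 (left_ne_zero_of_mul h)))
      b (hg (mem_support_iff.2 (right_ne_zero_of_mul h))) hab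
  exact hne (by rw [add_left_cancel hab])

theorem coeff_add_self_sum_sq_of_isDoublingVertex [CommSemiring R]
    {g : ι → MvPolynomial σ R} (hg : ∀ i, ↑(g i).support ⊆ S) (he : IsDoublingVertex S e) :
    coeff (e + e) (∑ i, g i ^ 2) = ∑ i, coeff e (g i) ^ 2 := by
  rw [coeff_sum]
  exact Finset.sum_congr rfl fun i _ ↦ coeff_add_self_sq_of_isDoublingVertex (hg i) he

variable [CommRing R] [LinearOrder R] [IsStrictOrderedRing R] {g : ι → MvPolynomial σ R}

theorem coeff_add_self_sum_sq_nonneg (hg : ∀ i, ↑(g i).support ⊆ S)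
    (he : IsDoublingVertex S e) : 0 ≤ coeff (e + e) (∑ i, g i ^ 2) := by
  rw [coeff_add_self_sum_sq_of_isDoublingVertex hg he]
  positivity

theorem support_subset_of_coeff_add_self_eq_zero {p : MvPolynomial σ R} {T : Set (σ →₀ ℕ)}
    (hp : p = ∑ i, g i ^ 2) (hg : ∀ i, ↑(g i).support ⊆ S) (he : IsDoublingVertex S e)
    (h : coeff (e + e) p = 0) (hST : S \ {e} ⊆ T) (i : ι) : ↑(g i).support ⊆ T := by
  rw [hp, coeff_add_self_sum_sq_of_isDoublingVertex hg he,
    Fintype.sum_eq_zero_iff_of_nonneg fun _ ↦ sq_nonneg _] at h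
  intro a ha
  refine hST ⟨hg i ha, fun hae ↦ mem_support_iff.1 ha ?_⟩
  rw [Set.mem_singleton_iff.1 hae]
  exact pow_eq_zero_iff two_ne_zero |>.1 (congrFun h i)

end MvPolynomial

namespace Motzkin

noncomputable def exponent (i j k : ℕ) : Fin 3 →₀ ℕ :=
  Finsupp.single 0 i + Finsupp.single 1 j + Finsupp.single 2 k

@[simp] lemma exponent_apply_zero (i j k : ℕ) : exponent i j k 0 = i := by simp [exponent]
@[simp] lemma exponent_apply_one (i j k : ℕ) : exponent i j k 1 = j := by simp [exponent]
@[simp] lemma exponent_apply_two (i j k : ℕ) : exponent i j k 2 = k := by simp [exponent]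

@[simp] lemma eq_exponent_iff {a : Fin 3 →₀ ℕ} {i j k : ℕ} :
    a = exponent i j k ↔ a 0 = i ∧ a 1 = j ∧ a 2 = k := by
  simp [Finsupp.ext_iff, Fin.forall_fin_succ]

lemma exponent_coords (a : Fin 3 →₀ ℕ) : exponent (a 0) (a 1) (a 2) = a :=
  (eq_exponent_iff.2 ⟨rfl, rfl, rfl⟩).symm

lemma forall_exponent {P : (Fin 3 →₀ ℕ) → Prop} : (∀ a, P a) ↔ ∀ i j k, P (exponent i j k) :=
  ⟨fun h _ _ _ ↦ h _, fun h a ↦ exponent_coords a ▸ h _ _ _⟩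

@[simp] lemma exponent_add (i j k i' j' k' : ℕ) :
    exponent i j k + exponent i' j' k' = exponent (i + i') (j + j') (k + k') := by
  simp

@[simp] lemma degree_exponent (i j k : ℕ) : (exponent i j k).degree = i + j + k := by
  simp [Finsupp.degree_eq_sum, Fin.sum_univ_three]

lemma monomial_exponent (i j k : ℕ) (r : ℝ) :
    monomial (exponent i j k) r = C r * X 0 ^ i * X 1 ^ j * X 2 ^ k := by
  simp only [exponent, X_pow_eq_monomial, C_mul_monomial, monomial_mul, mul_one]

noncomputable def halfSquarePlusMotzkin : MvPolynomial (Fin 3) ℝ :=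
  C (1 / 2 : ℝ) * (X 2 ^ 3 + 2 * (X 0 * X 1 * X 2) + X 0 ^ 2 * X 1) ^ 2 + Motzkin

lemma halfSquarePlusMotzkin_eq_sum_monomial : halfSquarePlusMotzkin =
    monomial (exponent 4 2 0) (3 / 2) + monomial (exponent 2 4 0) 1
      + monomial (exponent 0 0 6) (3 / 2) + monomial (exponent 2 2 2) (-1)
      + monomial (exponent 1 1 4) 2 + monomial (exponent 2 1 3) 1
      + monomial (exponent 3 2 1) 2 := by
  have h32 : C (3 / 2 : ℝ) = (3 : MvPolynomial (Fin 3) ℝ) * C (1 / 2) := by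
    rw [← map_ofNat C 3, ← C_mul]; norm_num
  have h2 : (2 : MvPolynomial (Fin 3) ℝ) * C (1 / 2) = 1 := by
    rw [← map_ofNat C 2, ← C_mul]; norm_num
  simp only [halfSquarePlusMotzkin, Motzkin, monomial_exponent, h32, map_one, map_neg, map_ofNat]
  linear_combination (2 * X 0 ^ 3 * X 1 ^ 2 * X 2 + 2 * X 0 ^ 2 * X 1 ^ 2 * X 2 ^ 2
    + X 0 ^ 2 * X 1 * X 2 ^ 3 + 2 * X 0 * X 1 * X 2 ^ 4 - X 2 ^ 6 - X 0 ^ 4 * X 1 ^ 2) * h2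

/-- The lattice points of `(1/2)·Newton(f) = conv{x²y, xy², z³}`. -/
def halfNewtonExponents : Set (Fin 3 →₀ ℕ) :=
  {a | a.degree = 3 ∧ a 0 ≤ 2 * a 1 ∧ a 1 ≤ 2 * a 0}

lemma isDoublingVertex_halfNewtonExponents :
    IsDoublingVertex halfNewtonExponents (exponent 1 1 1) := by
  simp [IsDoublingVertex, halfNewtonExponents, forall_exponent]
  omega

theorem support_subset_halfNewtonExponents {ι : Type*} [Fintype ι]
    {g : ι → MvPolynomial (Fin 3) ℝ} (hg : ∀ i, (g i).IsHomogeneous 3)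
    (hf : halfSquarePlusMotzkin = ∑ i, g i ^ 2) :
    ∀ i, ↑(g i).support ⊆ halfNewtonExponents := by
  have h₀ : ∀ i, ↑(g i).support ⊆ {a : Fin 3 →₀ ℕ | a.degree = 3} := fun i a ha ↦ by
    rw [Set.mem_ofPred_eq, Finsupp.degree_eq_weight_one]
    exact hg i (mem_support_iff.1 ha)
  have h₁ : ∀ i, ↑(g i).support ⊆ {a : Fin 3 →₀ ℕ | a.degree = 3 ∧ a 0 ≤ 2} :=
    support_subset_of_coeff_add_self_eq_zero (e := exponent 3 0 0) hf h₀
      (by simp [IsDoublingVertex, forall_exponent]; omega)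
      (by simp [halfSquarePlusMotzkin_eq_sum_monomial, coeff_monomial])
      (by simp [Set.subset_def, forall_exponent]; omega)
  have h₂ : ∀ i, ↑(g i).support ⊆ {a : Fin 3 →₀ ℕ | a.degree = 3 ∧ a 0 ≤ 2 ∧ a 1 ≤ 2} :=
    support_subset_of_coeff_add_self_eq_zero (e := exponent 0 3 0) hf h₁
      (by simp [IsDoublingVertex, forall_exponent]; omega)
      (by simp [halfSquarePlusMotzkin_eq_sum_monomial, coeff_monomial])
      (by simp [Set.subset_def, forall_exponent]; omega)
  have h₃ : ∀ i, ↑(g i).support ⊆ {a : Fin 3 →₀ ℕ | a.degree = 3 ∧ a 0 ≤ a 1 + 1 ∧ a 1 ≤ 2} :=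
    support_subset_of_coeff_add_self_eq_zero (e := exponent 2 0 1) hf h₂
      (by simp [IsDoublingVertex, forall_exponent]; omega)
      (by simp [halfSquarePlusMotzkin_eq_sum_monomial, coeff_monomial])
      (by simp [Set.subset_def, forall_exponent]; omega)
  have h₄ : ∀ i, ↑(g i).support ⊆
      {a : Fin 3 →₀ ℕ | a.degree = 3 ∧ a 0 ≤ a 1 + 1 ∧ a 1 ≤ a 0 + 1} :=
    support_subset_of_coeff_add_self_eq_zero (e := exponent 0 2 1) hf h₃
      (by simp [IsDoublingVertex, forall_exponent]; omega)
      (by simp [halfSquarePlusMotzkin_eq_sum_monomial, coeff_monomial])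
      (by simp [Set.subset_def, forall_exponent]; omega)
  have h₅ : ∀ i, ↑(g i).support ⊆
      {a : Fin 3 →₀ ℕ | a.degree = 3 ∧ a 0 ≤ 2 * a 1 ∧ a 1 ≤ a 0 + 1} :=
    support_subset_of_coeff_add_self_eq_zero (e := exponent 1 0 2) hf h₄
      (by simp [IsDoublingVertex, forall_exponent]; omega)
      (by simp [halfSquarePlusMotzkin_eq_sum_monomial, coeff_monomial])
      (by simp [Set.subset_def, forall_exponent]; omega)
  exact support_subset_of_coeff_add_self_eq_zero (e := exponent 0 1 2) hf h₅
    (by simp [IsDoublingVertex, forall_exponent]; omega)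
    (by simp [halfSquarePlusMotzkin_eq_sum_monomial, coeff_monomial])
    (by simp [Set.subset_def, halfNewtonExponents, forall_exponent]; omega)

end Motzkin

open Motzkin in
/-- The form `f = (1/2)(z³ + 2xyz + x²y)² + M(x,y,z)` is not a sum of squares of
real forms of degree 3. -/
theorem half_square_plus_motzkin_not_sos :
    ¬ ∃ (k : ℕ) (g : Fin k → MvPolynomial (Fin 3) ℝ),
      (∀ i, (g i).IsHomogeneous 3) ∧
      C (1 / 2 : ℝ) * (X 2 ^ 3 + 2 * (X 0 * X 1 * X 2) + X 0 ^ 2 * X 1) ^ 2 + Motzkin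
        = ∑ i, (g i) ^ 2 := by
  rintro ⟨k, g, hg, hf⟩
  change halfSquarePlusMotzkin = _ at hf
  have hcoeff : coeff (exponent 1 1 1 + exponent 1 1 1) (∑ i, g i ^ 2) = -1 := by
    rw [← hf]
    simp [halfSquarePlusMotzkin_eq_sum_monomial, coeff_monomial]
  have hnonneg := coeff_add_self_sum_sq_nonneg (support_subset_halfNewtonExponents hg hf)
    isDoublingVertex_halfNewtonExponents
  linarith
end

section
/- The form f = (xy + xz + yz)² + w⁴ + Q₁(x,y,z,w), where Q₁ is the Choi–Lam form, is not a sum of squares of real quadratic forms in four variables. -/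
/-!
Suppose `f = ∑ gᵢ²` with real quadratic forms `gᵢ`, and compare coefficients. The coefficient
of `x⁴` in `∑ gᵢ²` is `∑ (coeff of x² in gᵢ)²`, and `x⁴` does not occur in `f`, so no `gᵢ`
contains `x²`; likewise `y²` and `z²`. Once these are gone, the coefficient of `x²w²` in
`∑ gᵢ²` is `∑ (coeff of xw in gᵢ)²`, which vanishes as well, and likewise for `yw` and `zw`.
Now no monomial of any `gᵢ` has degree exactly one in `w`, hence neither does any monomial of
`gᵢ²`; but `wxyz` occurs in `f` with coefficient `-4`.
-/

open MvPolynomial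

open Finsupp

namespace Finsupp

variable {σ : Type*}

theorem eq_of_le_of_degree_le {α β : σ →₀ ℕ} (hle : α ≤ β) (hdeg : β.degree ≤ α.degree) :
    α = β := by
  obtain ⟨γ, rfl⟩ := exists_add_of_le hle
  rw [map_add] at hdeg
  rw [(degree_eq_zero_iff γ).mp (by omega), add_zero]

theorem single_add_single_apply_le {j w : σ} (hjw : j ≠ w) (β : σ →₀ ℕ) :
    single j (β j) + single w (β w) ≤ β := by
  intro i
  by_cases hi : i = j
  · subst hi; simp [hjw]
  · by_cases hi' : i = w
    · subst hi'; simp [hjw.symm]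
    · simp [Ne.symm hi, Ne.symm hi']

end Finsupp

namespace MvPolynomial

variable {σ R : Type*}

section CommSemiring

variable [CommSemiring R] {p : MvPolynomial σ R}

theorem coeff_sq_eq_sq_of_forall_ne {α μ : σ →₀ ℕ} (hμ : α + α = μ)
    (h : ∀ β γ, β + γ = μ → β ≠ α → coeff β p * coeff γ p = 0) :
    coeff μ (p ^ 2) = coeff α p ^ 2 := by
  classical
  rw [sq, coeff_mul, Finset.sum_eq_single (α, α) _ (by simp [hμ]), sq]
  rintro ⟨β, γ⟩ hβγ hne
  have hβγ : β + γ = μ := Finset.HasAntidiagonal.mem_antidiagonal.mp hβγ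
  refine h β γ hβγ fun hβ => hne ?_
  subst hβ
  rw [add_left_cancel (hβγ.trans hμ.symm)]

theorem coeff_sq_eq_zero_of_apply_eq_one {w : σ} {μ : σ →₀ ℕ}
    (h : ∀ β : σ →₀ ℕ, β w = 1 → coeff β p = 0) (hμ : μ w = 1) : coeff μ (p ^ 2) = 0 := by
  classical
  rw [sq, coeff_mul]
  refine Finset.sum_eq_zero fun ⟨β, γ⟩ hβγ => ?_
  have hw : β w + γ w = 1 := by
    rw [← hμ, ← Finset.HasAntidiagonal.mem_antidiagonal.mp hβγ]; rfl
  rcases (by omega : β w = 1 ∨ γ w = 1) with hβ | hγ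
  · rw [h β hβ, zero_mul]
  · rw [h γ hγ, mul_zero]

variable {n : ℕ}

theorem IsHomogeneous.degree_eq_of_coeff_mul_coeff_ne_zero (hp : p.IsHomogeneous n)
    {β γ : σ →₀ ℕ} (h : coeff β p * coeff γ p ≠ 0) : β.degree = n ∧ γ.degree = n := by
  constructor <;> by_contra hne <;> simp [hp.coeff_eq_zero hne] at h

theorem IsHomogeneous.coeff_single_two_mul_sq (hp : p.IsHomogeneous n) (j : σ) :
    coeff (single j (2 * n)) (p ^ 2) = coeff (single j n) p ^ 2 := by
  refine coeff_sq_eq_sq_of_forall_ne (by rw [← single_add, two_mul]) fun β γ hβγ hβ => ?_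
  by_contra hne
  obtain ⟨hβ2, hγ2⟩ := hp.degree_eq_of_coeff_mul_coeff_ne_zero hne
  have hj : β j + γ j = 2 * n := by simpa using congr($hβγ j)
  have := le_degree j β
  have := le_degree j γ
  exact hβ (eq_of_le_of_degree_le (single_le_iff.mpr (by omega)) (by simp [hβ2])).symm

theorem IsHomogeneous.coeff_single_two_add_single_two_sq (hp : p.IsHomogeneous 2) {j w : σ}
    (hjw : j ≠ w) (hj : coeff (single j 2) p = 0) :
    coeff (single j 2 + single w 2) (p ^ 2) = coeff (single j 1 + single w 1) p ^ 2 := by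
  classical
  refine coeff_sq_eq_sq_of_forall_ne (by rw [add_add_add_comm, ← single_add, ← single_add])
    fun β γ hβγ hβ => ?_
  by_contra hne
  obtain ⟨hβ2, hγ2⟩ := hp.degree_eq_of_coeff_mul_coeff_ne_zero hne
  have hsumj : β j + γ j = 2 := by simpa [single_apply, hjw.symm] using congr($hβγ j)
  have hsumw : β w + γ w = 2 := by simpa [single_apply, hjw] using congr($hβγ w)
  have hβle := degree_mono (single_add_single_apply_le hjw β)
  have hγle := degree_mono (single_add_single_apply_le hjw γ)
  simp only [map_add, degree_single] at hβle hγle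
  -- `(β, γ)` is `(2eⱼ, 2e_w)`, `(2e_w, 2eⱼ)` or `(eⱼ + e_w, eⱼ + e_w)`
  rcases (by omega : β j = 2 ∨ γ j = 2 ∨ (β j = 1 ∧ β w = 1)) with h | h | ⟨h1, h2⟩
  · rw [← eq_of_le_of_degree_le (single_le_iff.mpr h.ge) (by simp [hβ2]), hj, zero_mul] at hne
    exact hne rfl
  · rw [← eq_of_le_of_degree_le (single_le_iff.mpr h.ge) (by simp [hγ2]), hj, mul_zero] at hne
    exact hne rfl
  · refine hβ (eq_of_le_of_degree_le ?_ (by simp [hβ2])).symm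
    simpa [h1, h2] using single_add_single_apply_le hjw β

theorem IsHomogeneous.coeff_eq_zero_of_apply_eq_one (hp : p.IsHomogeneous 2) {w : σ}
    (h : ∀ j ≠ w, coeff (single j 1 + single w 1) p = 0) {β : σ →₀ ℕ} (hβ : β w = 1) :
    coeff β p = 0 := by
  by_contra hne
  have hβ2 : β.degree = 2 := by
    by_contra hd; exact hne (hp.coeff_eq_zero hd)
  have hle : single w 1 ≤ β := single_le_iff.mpr hβ.ge
  have hrest : (β - single w 1).degree = 1 := by
    have := congr(degree $(tsub_add_cancel_of_le hle))
    simp only [map_add, degree_single] at this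
    omega
  obtain ⟨j, hj⟩ := range_single_one.symm.subset hrest
  have hjw : j ≠ w := by
    rintro rfl
    simpa [hβ] using congr($hj j)
  rw [← tsub_add_cancel_of_le hle, ← hj, h j hjw] at hne
  exact hne rfl

end CommSemiring

theorem coeff_eq_zero_of_coeff_sum_sq_eq_zero
    [CommRing R] [LinearOrder R] [IsStrictOrderedRing R] {ι : Type*} [Fintype ι]
    {g : ι → MvPolynomial σ R} {α μ : σ →₀ ℕ}
    (hsq : ∀ i, coeff μ (g i ^ 2) = coeff α (g i) ^ 2) (h : coeff μ (∑ i, g i ^ 2) = 0) (i : ι) :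
    coeff α (g i) = 0 := by
  simp only [coeff_sum, hsq] at h
  exact pow_eq_zero_iff two_ne_zero |>.mp <|
    congrFun ((Fintype.sum_eq_zero_iff_of_nonneg fun i => sq_nonneg _).mp h) i

end MvPolynomial

theorem sq_add_X_pow_four_add_choiLamQ1_eq :
    (X 0 * X 1 + X 0 * X 2 + X 1 * X 2) ^ 2 + X 3 ^ 4 + ChoiLamQ1 =
      monomial (single 0 2 + single 1 2) 2 + monomial (single 0 2 + single 2 2) 2
        + monomial (single 1 2 + single 2 2) 2 + monomial (single 3 4) 2
        + monomial (single 0 2 + single 1 1 + single 2 1) 2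
        + monomial (single 0 1 + single 1 2 + single 2 1) 2
        + monomial (single 0 1 + single 1 1 + single 2 2) 2
        + monomial (single 0 1 + single 1 1 + single 2 1 + single 3 1) (-4) := by
  simp only [ChoiLamQ1, monomial_add_single, ← C_mul_X_pow_eq_monomial, map_neg, map_ofNat]
  ring

/-- The form `f = (xy + xz + yz)² + w⁴ + Q₁(x,y,z,w)` is not a sum of squares of
real quadratic forms in four variables. -/
theorem square_plus_w4_plus_choiLam_not_sos :
    ¬ ∃ (k : ℕ) (g : Fin k → MvPolynomial (Fin 4) ℝ),
      (∀ i, (g i).IsHomogeneous 2) ∧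
      (X 0 * X 1 + X 0 * X 2 + X 1 * X 2) ^ 2 + X 3 ^ 4 + ChoiLamQ1
        = ∑ i, (g i) ^ 2 := by
  rintro ⟨k, g, hg, hf⟩
  rw [sq_add_X_pow_four_add_choiLamQ1_eq] at hf
  have hsq : ∀ j ≠ (3 : Fin 4), ∀ i, coeff (single j 2) (g i) = 0 := by
    intro j hj
    refine coeff_eq_zero_of_coeff_sum_sq_eq_zero (fun i => (hg i).coeff_single_two_mul_sq j) ?_
    rw [← hf]
    fin_cases j <;>
      simp [coeff_monomial, Finsupp.ext_iff, Fin.forall_fin_succ, single_apply] at hj ⊢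
  have hmix : ∀ j ≠ (3 : Fin 4), ∀ i, coeff (single j 1 + single 3 1) (g i) = 0 := by
    intro j hj
    refine coeff_eq_zero_of_coeff_sum_sq_eq_zero
      (fun i => (hg i).coeff_single_two_add_single_two_sq hj (hsq j hj i)) ?_
    rw [← hf]
    fin_cases j <;>
      simp [coeff_monomial, Finsupp.ext_iff, Fin.forall_fin_succ, single_apply] at hj ⊢
  have hxyzw : coeff (single 0 1 + single 1 1 + single 2 1 + single 3 1) (∑ i, g i ^ 2) = 0 := by
    rw [coeff_sum]
    exact Finset.sum_eq_zero fun i _ => coeff_sq_eq_zero_of_apply_eq_one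
      (fun β => (hg i).coeff_eq_zero_of_apply_eq_one (hmix · · i)) (by simp)
  rw [← hf] at hxyzw
  simp [coeff_monomial, Finsupp.ext_iff, Fin.forall_fin_succ, single_apply] at hxyzw
end
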